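/- arXiv:0706.3021 — 8 statements merged into one kernel-verified Lean document; each statement's English description precedes it below -/
import Mathlib

section
/- If G is a torsion-free group that is virtually cyclic (i.e., has a cyclic subgroup of finite index), then G is cyclic. -/
/-!
Passing to the normal core, we may assume the cyclic subgroup `⟨g⟩` of finite index `n` is
normal. For every `x`, `x g x⁻¹ = g ^ m` and `x ^ n = g ^ k`; conjugating `x ^ n` by `x` gives
`g ^ (m k) = g ^ k`, so torsion-freeness forces `m = 1`: `g` is central. The transfer
`G → ⟨g⟩` into a central subgroup is `x ↦ x ^ n`, which is injective in a torsion-free group,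
so `G` embeds into the cyclic group `⟨g⟩`.
-/

/-- The Mathlib (Dec 2024) definition, removed since: a monoid is torsion-free if no
nontrivial element has finite order. -/
def Monoid.IsTorsionFree (G : Type*) [Monoid G] : Prop :=
  ∀ g : G, g ≠ 1 → ¬IsOfFinOrder g

open Subgroup

open scoped IsMulCommutative in
theorem MonoidHom.coe_transfer_id_of_le_center {G : Type*} [Group G] {H : Subgroup G}
    [IsMulCommutative H] [H.FiniteIndex] (hH : H ≤ center G) (x : G) :
    (transfer (MonoidHom.id H) x : G) = x ^ H.index := by
  refine congrArg Subtype.val (transfer_eq_pow _ x fun k y hk => ?_)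
  calc y⁻¹ * x ^ k * y = y * (y⁻¹ * x ^ k * y) * y⁻¹ := by
        rw [mem_center_iff.mp (hH hk) y, mul_inv_cancel_right]
    _ = x ^ k := by group

namespace Monoid.IsTorsionFree

variable {G : Type*} [Group G] (htf : Monoid.IsTorsionFree G)
include htf

theorem eq_one_of_pow_eq_one {x : G} {n : ℕ} (hn : n ≠ 0) (h : x ^ n = 1) : x = 1 := by
  by_contra hx
  exact htf x hx (isOfFinOrder_iff_pow_eq_one.mpr ⟨n, Nat.pos_of_ne_zero hn, h⟩)

theorem injective_of_coe_eq_pow {H : Subgroup G} (f : G →* H) {n : ℕ} (hn : n ≠ 0)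
    (hf : ∀ x, (f x : G) = x ^ n) : Function.Injective f :=
  (injective_iff_map_eq_one f).mpr fun x hx =>
    htf.eq_one_of_pow_eq_one hn (by rw [← hf, hx, OneMemClass.coe_one])

theorem zpow_injective {g : G} (hg : g ≠ 1) : Function.Injective fun k : ℤ => g ^ k :=
  injective_zpow_iff_not_isOfFinOrder.mpr (htf g hg)

theorem commute_of_pow_mem_zpowers {g x : G} {n : ℕ} (hn : n ≠ 0)
    (hpow : x ^ n ∈ zpowers g) (hconj : x * g * x⁻¹ ∈ zpowers g) : Commute x g := by
  by_cases hg : g = 1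
  · rw [hg]; exact Commute.one_right x
  obtain ⟨k, hk⟩ := hpow
  obtain ⟨m, hm⟩ := hconj
  simp only at hk hm
  rcases eq_or_ne k 0 with rfl | hk0
  · rw [zpow_zero] at hk
    rw [htf.eq_one_of_pow_eq_one hn hk.symm]; exact Commute.one_left g
  have hmk : g ^ (m * k) = g ^ k := by
    calc g ^ (m * k) = x * g ^ k * x⁻¹ := by rw [zpow_mul, hm, conj_zpow]
      _ = g ^ k := by rw [hk, mul_inv_eq_iff_eq_mul, ← pow_succ', ← pow_succ]
  have hm1 : m = 1 := by
    simpa [hk0] using htf.zpow_injective hg hmk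
  rw [hm1, zpow_one] at hm
  exact mul_inv_eq_iff_eq_mul.mp hm.symm

theorem mem_center_of_zpowers_normal {g : G} [(zpowers g).Normal] [(zpowers g).FiniteIndex] :
    g ∈ center G :=
  mem_center_iff.mpr fun x =>
    (htf.commute_of_pow_mem_zpowers FiniteIndex.index_ne_zero ((zpowers g).pow_index_mem x)
      (Normal.conj_mem inferInstance g (mem_zpowers g) x)).eq

end Monoid.IsTorsionFree

/-- A torsion-free virtually cyclic group is cyclic. -/
theorem torsionFree_virtuallyCyclic_isCyclic (G : Type*) [Group G]
    (htf : Monoid.IsTorsionFree G)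
    (H : Subgroup G) (hcyc : IsCyclic H) (hfi : H.FiniteIndex) :
    IsCyclic G := by
  have : IsCyclic H.normalCore := isCyclic_of_le H.normalCore_le
  obtain ⟨g, hg⟩ := (H.normalCore.isCyclic_iff_exists_zpowers_eq_top).mp this
  have : (zpowers g).Normal := hg ▸ H.normalCore_normal
  have : (zpowers g).FiniteIndex := hg ▸ H.finiteIndex_normalCore
  have hcentral : zpowers g ≤ center G := zpowers_le.mpr htf.mem_center_of_zpowers_normal
  exact isCyclic_of_injective _ <| htf.injective_of_coe_eq_pow _ FiniteIndex.index_ne_zero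
    (MonoidHom.coe_transfer_id_of_le_center hcentral)
end

section
/- If G is a group whose center has finite index, then the commutator subgroup of G is finite. -/
/-! A commutator `⁅g, h⁆` is unchanged when `g` and `h` are multiplied by central elements, so it
depends only on the cosets of `g` and `h` modulo the center. If the center has finite index, there
are therefore only finitely many commutators, and a group with finitely many commutators has a
finite commutator subgroup. -/

open scoped commutatorElement

section

variable {G : Type*} [Group G]

theorem commutatorElement_mul_mem_center (a b : G) {z w : G} (hz : z ∈ Subgroup.center G)
    (hw : w ∈ Subgroup.center G) : ⁅a * z, b * w⁆ = ⁅a, b⁆ := by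
  rw [Subgroup.mem_center_iff] at hz hw
  calc ⁅a * z, b * w⁆ = a * (b * w) * z * z⁻¹ * a⁻¹ * (w⁻¹ * b⁻¹) := by
        rw [commutatorElement_def, mul_assoc a z, ← hz (b * w)]; group
    _ = a * b * (a⁻¹ * w) * w⁻¹ * b⁻¹ := by rw [hw a⁻¹]; group
    _ = ⁅a, b⁆ := by rw [commutatorElement_def]; group

theorem commutatorElement_eq_of_leftRel_center {a b c d : G}
    (hac : QuotientGroup.leftRel (Subgroup.center G) a c)
    (hbd : QuotientGroup.leftRel (Subgroup.center G) b d) :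
    ⁅a, b⁆ = ⁅c, d⁆ := by
  rw [QuotientGroup.leftRel_apply] at hac hbd
  simpa only [mul_inv_cancel_left] using (commutatorElement_mul_mem_center a b hac hbd).symm

theorem finite_commutatorSet_of_finiteIndex_center [(Subgroup.center G).FiniteIndex] :
    Finite (commutatorSet G) := by
  let commutatorMod : G ⧸ Subgroup.center G → G ⧸ Subgroup.center G → G :=
    fun x y => Quotient.liftOn₂' x y (⁅·, ·⁆) fun _ _ _ _ =>
      commutatorElement_eq_of_leftRel_center
  have hrange : commutatorSet G ⊆ Set.range (Function.uncurry commutatorMod) := by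
    rintro _ ⟨g, h, rfl⟩
    exact ⟨((g : G ⧸ Subgroup.center G), (h : G ⧸ Subgroup.center G)), rfl⟩
  exact ((Set.finite_range _).subset hrange).to_subtype

end

/-- Schur's theorem: if the center has finite index, the commutator subgroup is finite. -/
theorem commutator_finite_of_center_finiteIndex (G : Type*) [Group G]
    (h : (Subgroup.center G).FiniteIndex) :
    Finite (commutator G) := by
  have := finite_commutatorSet_of_finiteIndex_center (G := G)
  -- Mathlib's instance `Finite (commutator G)` from `Finite (commutatorSet G)` (`GroupTheory.Schreier`)
  infer_instance
end

section
/- If G is a torsion-free group whose center has finite index, then G is abelian. -/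
/-!
The transfer `G →* Z(G)`, `g ↦ g ^ [G : Z(G)]`, is a homomorphism into an abelian group, so it
kills every commutator: each commutator has finite order, hence is trivial in a torsion-free group.
-/

open Subgroup MonoidHom

open scoped commutatorElement

section

variable {G : Type*} [Group G] [FiniteIndex (center G)]

lemma commutatorElement_pow_index_center_eq_one (a b : G) : ⁅a, b⁆ ^ (center G).index = 1 := by
  rw [← transferCenterPow_apply, map_commutatorElement,
    commutatorElement_eq_one_iff_mul_comm.mpr (_root_.mul_comm' _ _), OneMemClass.coe_one]

lemma isOfFinOrder_commutatorElement (a b : G) : IsOfFinOrder ⁅a, b⁆ :=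
  isOfFinOrder_iff_pow_eq_one.mpr
    ⟨_, Nat.pos_of_ne_zero FiniteIndex.index_ne_zero, commutatorElement_pow_index_center_eq_one a b⟩

end

/-- A torsion-free group whose center has finite index is abelian. -/
theorem abelian_of_torsionFree_center_finiteIndex (G : Type*) [Group G]
    (htf : Monoid.IsTorsionFree G)
    (h : (Subgroup.center G).FiniteIndex) :
    ∀ a b : G, a * b = b * a := by
  intro a b
  rw [← commutatorElement_eq_one_iff_mul_comm]
  by_contra hne
  exact htf _ hne (isOfFinOrder_commutatorElement a b)
end

section
/- In a group G whose center has index n, the number of distinct commutators [g,h] = g⁻¹h⁻¹gh is at most (n-1)² + 1. -/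
/-!
Multiplying `g` or `h` by a central element does not change `⁅g, h⁆`, so the commutator is a
function of the pair of cosets `(gZ, hZ)`. It equals `1` as soon as one of the cosets is trivial,
so besides `1` it takes at most `(n - 1)²` values.
-/

open Subgroup
open scoped commutatorElement

section
variable {G : Type*} [Group G]

theorem commutatorElement_mul_mem_center_left {g h z : G} (hz : z ∈ center G) :
    ⁅g * z, h⁆ = ⁅g, h⁆ := by
  calc ⁅g * z, h⁆ = g * (z * h) * z⁻¹ * g⁻¹ * h⁻¹ := by group
    _ = ⁅g, h⁆ := by rw [← mem_center_iff.mp hz h]; group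

theorem commutatorElement_mul_mem_center_right {g h z : G} (hz : z ∈ center G) :
    ⁅g, h * z⁆ = ⁅g, h⁆ := by
  rw [← commutatorElement_inv, commutatorElement_mul_mem_center_left hz, commutatorElement_inv]

theorem commutatorElement_eq_one_of_mem_center_left {g h : G} (hg : g ∈ center G) :
    ⁅g, h⁆ = 1 :=
  commutatorElement_eq_one_iff_mul_comm.mpr (mem_center_iff.mp hg h).symm

theorem commutatorElement_eq_one_of_mem_center_right {g h : G} (hh : h ∈ center G) :
    ⁅g, h⁆ = 1 :=
  commutatorElement_eq_one_iff_mul_comm.mpr (mem_center_iff.mp hh g)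

def commutatorOfCenterCosets : G ⧸ center G → G ⧸ center G → G :=
  Quotient.lift₂ (fun g h => ⁅g, h⁆) fun g h g' h' hg hh => by
    rw [← mul_inv_cancel_left g g', ← mul_inv_cancel_left h h',
      commutatorElement_mul_mem_center_left (QuotientGroup.leftRel_apply.mp hg),
      commutatorElement_mul_mem_center_right (QuotientGroup.leftRel_apply.mp hh)]

theorem commutatorSet_subset_insert_one_image :
    commutatorSet G ⊆ insert 1 (Function.uncurry commutatorOfCenterCosets ''
      ({1}ᶜ ×ˢ {1}ᶜ : Set ((G ⧸ center G) × (G ⧸ center G)))) := by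
  rintro _ ⟨g, h, rfl⟩
  by_cases hg : g ∈ center G
  · exact .inl (commutatorElement_eq_one_of_mem_center_left hg)
  by_cases hh : h ∈ center G
  · exact .inl (commutatorElement_eq_one_of_mem_center_right hh)
  refine .inr ⟨((g : G ⧸ center G), (h : G ⧸ center G)), ⟨?_, ?_⟩, rfl⟩ <;>
    simpa [QuotientGroup.eq_one_iff]

variable [FiniteIndex (center G)]

theorem finite_commutatorSet : (commutatorSet G).Finite :=
  (((Set.toFinite _).image _).insert 1).subset commutatorSet_subset_insert_one_image

theorem ncard_commutatorSet_le : (commutatorSet G).ncard ≤ ((center G).index - 1) ^ 2 + 1 :=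
  calc (commutatorSet G).ncard
      ≤ (Function.uncurry commutatorOfCenterCosets ''
          ({1}ᶜ ×ˢ {1}ᶜ : Set ((G ⧸ center G) × (G ⧸ center G)))).ncard + 1 :=
        (Set.ncard_le_ncard commutatorSet_subset_insert_one_image).trans (Set.ncard_insert_le _ _)
    _ ≤ ({1}ᶜ ×ˢ {1}ᶜ : Set ((G ⧸ center G) × (G ⧸ center G))).ncard + 1 := by
        gcongr; exact Set.ncard_image_le
    _ = ((center G).index - 1) ^ 2 + 1 := by
        rw [Set.ncard_prod, Set.ncard_compl, Set.ncard_singleton, index_eq_card, sq]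

end

-- Mathlib's `⁅g, h⁆` is `g * h * g⁻¹ * h⁻¹`, so `g⁻¹ * h⁻¹ * g * h = ⁅g⁻¹, h⁻¹⁆`.
theorem setOf_inv_mul_inv_mul_mul_mul_eq_commutatorSet (G : Type*) [Group G] :
    {x : G | ∃ g h : G, x = g⁻¹ * h⁻¹ * g * h} = commutatorSet G :=
  Set.ext fun _ => ⟨fun ⟨g, h, hx⟩ => ⟨g⁻¹, h⁻¹, by rw [hx, commutatorElement_def, inv_inv, inv_inv]⟩,
    fun ⟨g, h, hx⟩ => ⟨g⁻¹, h⁻¹, by rw [← hx, commutatorElement_def, inv_inv, inv_inv]⟩⟩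

/-- If the center of `G` has index `n`, then the set of commutators `g⁻¹h⁻¹gh`
has at most `(n-1)² + 1` elements. -/
theorem card_commutators_le (G : Type*) [Group G] (n : ℕ) (hn : n ≠ 0)
    (hidx : (Subgroup.center G).index = n) :
    {x : G | ∃ g h : G, x = g⁻¹ * h⁻¹ * g * h}.Finite ∧
      {x : G | ∃ g h : G, x = g⁻¹ * h⁻¹ * g * h}.ncard ≤ (n - 1) ^ 2 + 1 := by
  subst hidx
  have : (center G).FiniteIndex := ⟨hn⟩
  rw [setOf_inv_mul_inv_mul_mul_mul_eq_commutatorSet]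
  exact ⟨finite_commutatorSet, ncard_commutatorSet_le⟩
end

section
/- If G is a torsion-free virtually cyclic group, then the center of G has finite index in G. -/
/-!
Conjugation preserves the normal core `N` of the cyclic subgroup `H`, so it sends a generator `b`
of `N` to `b` or `b⁻¹`. If some `g` inverted `b`, then `g` would also invert the power `g ^ n ∈ N`,
`n = [G : N]`, which it commutes with; torsion-freeness forces `g ^ n = 1`, hence `g = 1`, and
then `b = b⁻¹` has finite order. So `b` is central, `N ≤ Z(G)`, and `N` has finite index.
-/

open Subgroup

section

variable {G : Type*} [Group G]

lemma conj_eq_or_eq_inv_of_zpowers_normal {b : G} [(zpowers b).Normal] (hb : ¬IsOfFinOrder b)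
    (g : G) : g * b * g⁻¹ = b ∨ g * b * g⁻¹ = b⁻¹ := by
  have hinj := injective_zpow_iff_not_isOfFinOrder.mpr hb
  obtain ⟨k, hk⟩ := mem_zpowers_iff.mp (Normal.conj_mem inferInstance b (mem_zpowers b) g)
  obtain ⟨m, hm⟩ := mem_zpowers_iff.mp (Normal.conj_mem inferInstance b (mem_zpowers b) g⁻¹)
  have hkm : k * m = 1 := hinj <| show b ^ (k * m) = b ^ (1 : ℤ) by
    rw [zpow_one, zpow_mul, hk, conj_zpow, hm]
    group
  rcases Int.isUnit_iff.mp (IsUnit.of_mul_eq_one m hkm) with rfl | rfl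
  · exact .inl (by simpa using hk.symm)
  · exact .inr (by simpa using hk.symm)

lemma pow_eq_one_of_conj_eq_inv {b g : G} (hb : ¬IsOfFinOrder b) (hinv : g * b * g⁻¹ = b⁻¹)
    {n : ℕ} (hn : g ^ n ∈ zpowers b) : g ^ n = 1 := by
  obtain ⟨t, ht⟩ := mem_zpowers_iff.mp hn
  have hconj : b ^ t = b ^ (-t) :=
    calc b ^ t = g * b ^ t * g⁻¹ := by rw [ht]; group
      _ = b ^ (-t) := by rw [← conj_zpow, hinv, inv_zpow, zpow_neg]
  have ht0 : t = 0 := by have := injective_zpow_iff_not_isOfFinOrder.mpr hb hconj; omega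
  rw [← ht, ht0, zpow_zero]

lemma mem_center_of_zpowers_normal_of_finiteIndex (htf : ∀ g : G, g ≠ 1 → ¬IsOfFinOrder g)
    (b : G) [(zpowers b).Normal] [(zpowers b).FiniteIndex] : b ∈ center G := by
  by_cases hb1 : b = 1
  · exact hb1 ▸ one_mem _
  have hb := htf b hb1
  refine mem_center_iff.mpr fun g => ?_
  rcases conj_eq_or_eq_inv_of_zpowers_normal hb g with hfix | hinv
  · exact mul_inv_eq_iff_eq_mul.mp hfix
  have hpow : g ^ (zpowers b).index = 1 :=
    pow_eq_one_of_conj_eq_inv hb hinv ((zpowers b).pow_index_mem g)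
  have hg : g = 1 := by
    by_contra hg
    exact htf g hg <| isOfFinOrder_iff_pow_eq_one.mpr
      ⟨_, Nat.pos_of_ne_zero FiniteIndex.index_ne_zero, hpow⟩
  have hbb : b * b = 1 := mul_eq_one_iff_eq_inv.mpr (by simpa [hg] using hinv)
  exact absurd (isOfFinOrder_iff_pow_eq_one.mpr ⟨2, two_pos, by rwa [pow_two]⟩) hb

end

/-- In a torsion-free virtually cyclic group, the center has finite index. -/
theorem center_finiteIndex_of_torsionFree_virtuallyCyclic (G : Type*) [Group G]
    (htf : ∀ g : G, g ≠ 1 → ¬IsOfFinOrder g)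
    (H : Subgroup G) (hcyc : IsCyclic H) (hfi : H.FiniteIndex) :
    (Subgroup.center G).FiniteIndex := by
  have : IsCyclic H.normalCore := isCyclic_of_le (normalCore_le H)
  obtain ⟨b, hb⟩ := H.normalCore.isCyclic_iff_exists_zpowers_eq_top.mp this
  have : (zpowers b).Normal := hb ▸ normalCore_normal H
  have : (zpowers b).FiniteIndex := hb ▸ finiteIndex_normalCore H
  exact finiteIndex_of_le <|
    zpowers_le.mpr (mem_center_of_zpowers_normal_of_finiteIndex htf b)
end

section
/- If G is a torsion-free group in which the centralizer of every nontrivial element is cyclic, then G is a CSA-group, i.e., every maximal abelian subgroup A of G is malnormal: A ∩ gAg⁻¹ = {1} for every g ∈ G \ A. -/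
/-!
Centralizers of nontrivial elements are cyclic, hence abelian, so by maximality the centralizer
of every nontrivial `a ∈ A` is `A` itself. If `x = g b g⁻¹ ≠ 1` with `x, b ∈ A`, conjugation by
`g` carries `A = C(b)` onto `C(x) = A`, so `g` normalizes the infinite cyclic group `A = ⟨c⟩`.
It then acts on `A` by `c ↦ c^{±1}`, so `g²` centralizes `c`, i.e. `g² ∈ A`. As `G` is
torsion-free, `g² ≠ 1`, and `g ∈ C(g²) = A`.
-/

namespace Subgroup

variable {G : Type*} [Group G]

theorem centralizer_singleton_eq_of_maximal_isMulCommutative {A : Subgroup G}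
    [IsMulCommutative A] (hmax : ∀ B : Subgroup G, IsMulCommutative B → A ≤ B → B = A)
    {x : G} (hx : x ∈ A) [IsMulCommutative (centralizer {x})] : centralizer {x} = A :=
  hmax _ inferInstance fun _ ha =>
    mem_centralizer_singleton_iff.mpr (setLike_mul_comm ha hx)

theorem mem_normalizer_of_inf_map_conj_ne_bot {A : Subgroup G}
    (hC : ∀ a ∈ A, a ≠ 1 → centralizer {a} = A) {g : G}
    (h : A ⊓ A.map (MulAut.conj g).toMonoidHom ≠ ⊥) : g ∈ normalizer A := by
  obtain ⟨x, ⟨hxA, b, hbA, rfl⟩, hx1⟩ := (bot_or_exists_ne_one _).resolve_left h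
  simp only [MulEquiv.toMonoidHom_eq_coe, MonoidHom.coe_coe, MulAut.conj_apply] at hxA hx1
  have hb1 : b ≠ 1 := by rintro rfl; simp at hx1
  refine mem_normalizer_iff.mpr fun y => ?_
  calc y ∈ A ↔ Commute y b := by rw [← hC b hbA hb1, mem_centralizer_singleton_iff]; rfl
    _ ↔ Commute (g * y * g⁻¹) (g * b * g⁻¹) := (Commute.conj_iff g).symm
    _ ↔ g * y * g⁻¹ ∈ A := by rw [← hC _ hxA hx1, mem_centralizer_singleton_iff]; rfl

theorem commute_sq_of_mem_normalizer_zpowers {c g : G} (hc : ¬IsOfFinOrder c)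
    (hg : g ∈ normalizer (zpowers c)) : Commute (g ^ 2) c := by
  obtain ⟨k, hk⟩ := mem_zpowers_iff.mp ((mem_normalizer_iff.mp hg c).mp (mem_zpowers c))
  obtain ⟨j, hj⟩ := mem_zpowers_iff.mp ((mem_normalizer_iff''.mp hg c).mp (mem_zpowers c))
  have hconj (n : ℤ) : g * c ^ n * g⁻¹ = c ^ (k * n) := by rw [← conj_zpow, ← hk, zpow_mul]
  -- `c = g (g⁻¹ c g) g⁻¹ = c ^ (k * j)`
  have hkj : k * j = 1 := injective_zpow_iff_not_isOfFinOrder.mpr hc <| by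
    simp only [← hconj, hj, zpow_one]
    group
  have hkk : k * k = 1 := Int.isUnit_mul_self (isUnit_iff_exists_inv.mpr ⟨j, hkj⟩)
  rw [commute_iff_eq, ← mul_inv_eq_iff_eq_mul]
  calc g ^ 2 * c * (g ^ 2)⁻¹
      = g * (g * c ^ (1 : ℤ) * g⁻¹) * g⁻¹ := by simp only [zpow_one, sq, mul_inv_rev, mul_assoc]
    _ = c := by rw [hconj, hconj, mul_one, hkk, zpow_one]

end Subgroup

open Subgroup in
/-- If `G` is torsion-free and the centralizer of every nontrivial element is cyclic,
then every maximal abelian subgroup of `G` is malnormal (`G` is CSA). -/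
theorem csa_of_torsionFree_cyclic_centralizers (G : Type*) [Group G]
    (htf : ∀ g : G, g ≠ 1 → ¬IsOfFinOrder g)
    (hcent : ∀ x : G, x ≠ 1 → IsCyclic (Subgroup.centralizer {x}))
    (A : Subgroup G) (hA : IsMulCommutative A)
    (hmax : ∀ B : Subgroup G, IsMulCommutative B → A ≤ B → B = A) :
    ∀ g : G, g ∉ A → A ⊓ Subgroup.map ((MulAut.conj g).toMonoidHom) A = ⊥ := by
  have hC (a : G) (ha : a ∈ A) (ha1 : a ≠ 1) : centralizer {a} = A :=
    have := hcent a ha1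
    centralizer_singleton_eq_of_maximal_isMulCommutative hmax ha
  intro g hg
  by_contra hne
  obtain ⟨x, hxA, hx1⟩ := (bot_or_exists_ne_one A).resolve_left fun hbot => hne (by simp [hbot])
  obtain ⟨c, hcA⟩ := (centralizer {x}).isCyclic_iff_exists_zpowers_eq_top.mp (hcent x hx1)
  rw [hC x hxA hx1] at hcA
  have hc1 : c ≠ 1 := by
    rintro rfl
    rw [← hcA, zpowers_one_eq_bot, mem_bot] at hxA
    exact hx1 hxA
  have hg2A : g ^ 2 ∈ A := by
    rw [← hC c (hcA ▸ mem_zpowers c) hc1, mem_centralizer_singleton_iff]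
    exact commute_sq_of_mem_normalizer_zpowers (htf c hc1)
      (hcA ▸ mem_normalizer_of_inf_map_conj_ne_bot hC hne)
  have hg2 : g ^ 2 ≠ 1 := fun h =>
    htf g (fun h1 => hg (h1 ▸ A.one_mem)) (isOfFinOrder_iff_pow_eq_one.mpr ⟨2, two_pos, h⟩)
  exact hg (hC _ hg2A hg2 ▸ mem_centralizer_singleton_iff.mpr (pow_mul_comm' g 2).symm)
end

section
/- If G is a nonabelian CSA-group, then G has no element of order 2. -/
/-!
Let `i` be an involution of a CSA-group and `M` a maximal abelian subgroup containing it. Any two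
involutions `i, j` commute: otherwise `x = j * i ≠ 1` is inverted by `i`, so malnormality of a
maximal abelian subgroup containing `x` forces it to contain `i`, and then `i` commutes with `x`,
hence with `j`. In particular every conjugate `g * i * g⁻¹` commutes with `i`, so it lies in `M`
(the centralizer of a nontrivial element of `M` is `M`), and malnormality of `M` gives `g ∈ M`.
Thus `M = G` is abelian.
-/

namespace Subgroup

variable {G : Type*} [Group G]

theorem exists_maximal_isMulCommutative_ge (K : Subgroup G) [IsMulCommutative K] :
    ∃ A, K ≤ A ∧ Maximal (fun H : Subgroup G => IsMulCommutative H) A := by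
  refine zorn_le_nonempty₀ {H : Subgroup G | IsMulCommutative H}
    (fun c hc hchain H hH => ?_) K ‹_›
  have : ∀ H : c, IsMulCommutative (H : Subgroup G) := fun H => hc H.2
  have : Nonempty c := ⟨⟨H, hH⟩⟩
  refine ⟨sSup c, ?_, fun _ => le_sSup⟩
  rw [sSup_eq_iSup']
  exact isMulCommutative_iSup hchain.directedOn.directed_val

end Subgroup

def IsCSAGroup (G : Type*) [Group G] : Prop :=
  ∀ A : Subgroup G, Maximal (fun H : Subgroup G => IsMulCommutative H) A →
    ∀ g ∉ A, A ⊓ A.map (MulAut.conj g).toMonoidHom = ⊥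

namespace IsCSAGroup

variable {G : Type*} [Group G] (hG : IsCSAGroup G)
include hG

theorem mem_of_conj_mem {A : Subgroup G}
    (hA : Maximal (fun H : Subgroup G => IsMulCommutative H) A) {a g : G} (ha : a ∈ A)
    (ha1 : a ≠ 1) (hga : g * a * g⁻¹ ∈ A) : g ∈ A := by
  by_contra hg
  have : g * a * g⁻¹ ∈ A ⊓ A.map (MulAut.conj g).toMonoidHom := ⟨hga, a, ha, rfl⟩
  rw [hG A hA g hg, Subgroup.mem_bot, conj_eq_one_iff] at this
  exact ha1 this

theorem mem_of_commute {A : Subgroup G}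
    (hA : Maximal (fun H : Subgroup G => IsMulCommutative H) A) {a g : G} (ha : a ∈ A)
    (ha1 : a ≠ 1) (hga : Commute g a) : g ∈ A :=
  hG.mem_of_conj_mem hA ha ha1 (by rwa [hga.eq, mul_inv_cancel_right])

theorem commute_of_sq_eq_one {i j : G} (hi : i ^ 2 = 1) (hj : j ^ 2 = 1) : Commute i j := by
  have hi' : i⁻¹ = i := inv_eq_of_mul_eq_one_right (by rwa [← pow_two])
  have hj' : j⁻¹ = j := inv_eq_of_mul_eq_one_right (by rwa [← pow_two])
  set x := j * i with hx_def
  by_cases hx : x = 1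
  · exact mul_eq_one_iff_eq_inv.1 hx ▸ (Commute.refl i).inv_right
  obtain ⟨B, hxB, hB⟩ := (Subgroup.zpowers x).exists_maximal_isMulCommutative_ge
  replace hxB : x ∈ B := hxB (Subgroup.mem_zpowers x)
  have hix : i * x * i⁻¹ = x⁻¹ := by
    rw [hx_def, mul_inv_rev, hi', hj', ← mul_assoc, mul_assoc (i * j), ← pow_two, hi, mul_one]
  have hiB : i ∈ B := hG.mem_of_conj_mem hB hxB hx (hix ▸ B.inv_mem hxB)
  have := hB.1
  have hix : Commute i x := setLike_mul_comm hiB hxB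
  simpa [x] using hix.mul_right (Commute.refl i).inv_right

theorem mul_comm_of_sq_eq_one {i : G} (hi : i ^ 2 = 1) (hi1 : i ≠ 1) (a b : G) :
    a * b = b * a := by
  obtain ⟨M, hiM, hM⟩ := (Subgroup.zpowers i).exists_maximal_isMulCommutative_ge
  replace hiM : i ∈ M := hiM (Subgroup.mem_zpowers i)
  have hmem (g : G) : g ∈ M := by
    have hconj : Commute (g * i * g⁻¹) i :=
      hG.commute_of_sq_eq_one (by rw [conj_pow, hi, mul_one, mul_inv_cancel]) hi
    exact hG.mem_of_conj_mem hM hiM hi1 (hG.mem_of_commute hM hiM hi1 hconj)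
  have := hM.1
  exact setLike_mul_comm (hmem a) (hmem b)

end IsCSAGroup

/-- A nonabelian CSA-group has no element of order 2. -/
theorem csa_nonabelian_no_involution (G : Type*) [Group G]
    (hCSA : ∀ A : Subgroup G, IsMulCommutative A →
      (∀ B : Subgroup G, IsMulCommutative B → A ≤ B → B = A) →
      ∀ g : G, g ∉ A → A ⊓ Subgroup.map ((MulAut.conj g).toMonoidHom) A = ⊥)
    (hna : ¬ ∀ a b : G, a * b = b * a) :
    ¬ ∃ g : G, orderOf g = 2 := by
  have hG : IsCSAGroup G := fun A hA =>
    hCSA A hA.1 fun _ hB hAB => le_antisymm (hA.2 hB hAB) hAB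
  rintro ⟨i, hi⟩
  have hi1 : i ≠ 1 := by
    rintro rfl
    simp at hi
  exact hna (hG.mul_comm_of_sq_eq_one (hi ▸ pow_orderOf_eq_one i) hi1)
end

section
/- Let G be a torsion-free group in which every nontrivial element has cyclic centralizer, let A be a maximal abelian subgroup of G with generator a, and let b ∈ G satisfy A ∩ bAb⁻¹ ≠ {1}. Then b ∈ A. -/
/-!
In such a group the centralizer of a nontrivial element of the maximal abelian subgroup `A` is
abelian and contains `A`, hence equals `A`. If `x = b y b⁻¹` is a nontrivial element of
`A ∩ bAb⁻¹`, then `A = C(x) = b C(y) b⁻¹ = bAb⁻¹`, so `b` normalizes `A = ⟨a⟩` and conjugation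
by `b` sends `a` to `a^{±1}`. Either way `b²` centralizes `a`, so `b² ∈ A`. By torsion-freeness
`b² ≠ 1` unless `b = 1`, and then `b ∈ C(b²) = A`.
-/

namespace Subgroup

variable {G : Type*} [Group G]

theorem centralizer_singleton_conj (b y : G) :
    centralizer {b * y * b⁻¹} = (centralizer {y}).map (MulAut.conj b).toMonoidHom := by
  ext z
  obtain ⟨w, rfl⟩ := (MulAut.conj b).surjective z
  rw [mem_map_equiv, MulEquiv.symm_apply_apply, mem_centralizer_singleton_iff,
    mem_centralizer_singleton_iff, ← MulAut.conj_apply, ← map_mul, ← map_mul,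
    (MulAut.conj b).apply_eq_iff_eq]

theorem centralizer_singleton_eq_of_maximal {A : Subgroup G} (hA : IsMulCommutative A)
    (hmax : ∀ B : Subgroup G, IsMulCommutative B → A ≤ B → B = A) {y : G} (hy : y ∈ A)
    [IsMulCommutative (centralizer {y})] : centralizer {y} = A :=
  hmax _ inferInstance fun _ hz ↦ mem_centralizer_singleton_iff.mpr (setLike_mul_comm hz hy)

theorem sq_mem_centralizer_of_mem_normalizer_zpowers {a b : G} (ha : ¬IsOfFinOrder a)
    (hb : b ∈ normalizer (zpowers a)) : b ^ 2 ∈ centralizer {a} := by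
  rw [mem_normalizer_iff_map_conj_eq, MonoidHom.map_zpowers, eq_comm,
    zpowers_eq_zpowers_iff ha, MonoidHom.coe_coe] at hb
  have hsq : MulAut.conj (b ^ 2) a = a := by
    rw [map_pow, sq, MulAut.mul_apply]
    rcases hb with h | h
    · rw [← h, ← h]
    · rw [← h, map_inv, ← h, inv_inv]
  rwa [MulAut.conj_apply, mul_inv_eq_iff_eq_mul, ← mem_centralizer_singleton_iff] at hsq

theorem mem_of_sq_mem {A : Subgroup G} (htf : ∀ g : G, g ≠ 1 → ¬IsOfFinOrder g)
    (hC : ∀ y ∈ A, y ≠ 1 → centralizer {y} = A) {b : G} (hb : b ^ 2 ∈ A) : b ∈ A := by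
  by_cases hb2 : b ^ 2 = 1
  · have : b = 1 := by
      by_contra hb1
      exact htf b hb1 (isOfFinOrder_iff_pow_eq_one.mpr ⟨2, two_pos, hb2⟩)
    exact this ▸ A.one_mem
  · rw [← hC _ hb hb2, mem_centralizer_singleton_iff]
    exact (Commute.self_pow b 2).eq

end Subgroup

open Subgroup

/-- Key malnormality step: if `G` is torsion-free with cyclic centralizers of
nontrivial elements, `A = ⟨a⟩` is a maximal abelian subgroup, and
`A ∩ bAb⁻¹ ≠ {1}`, then `b ∈ A`. -/
theorem mem_of_inter_conj_ne_bot (G : Type*) [Group G]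
    (htf : ∀ g : G, g ≠ 1 → ¬IsOfFinOrder g)
    (hcent : ∀ x : G, x ≠ 1 → IsCyclic (Subgroup.centralizer {x}))
    (A : Subgroup G) (a : G) (hAa : A = Subgroup.zpowers a)
    (hA : IsMulCommutative A)
    (hmax : ∀ B : Subgroup G, IsMulCommutative B → A ≤ B → B = A)
    (b : G) (hb : A ⊓ Subgroup.map ((MulAut.conj b).toMonoidHom) A ≠ ⊥) :
    b ∈ A := by
  have hC : ∀ y ∈ A, y ≠ 1 → centralizer {y} = A := fun y hy hy1 ↦
    have := hcent y hy1
    centralizer_singleton_eq_of_maximal hA hmax hy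
  obtain ⟨⟨_, hxA, y, hyA, rfl⟩, hx1⟩ := ne_bot_iff_exists_ne_one.mp hb
  simp only [MulEquiv.coe_toMonoidHom, MulAut.conj_apply, ne_eq, mk_eq_one] at hxA hx1
  have hy1 : y ≠ 1 := by rintro rfl; simp at hx1
  have hnorm : b ∈ normalizer A := mem_normalizer_iff_map_conj_eq.mpr <|
    calc A.map (MulAut.conj b).toMonoidHom
        = (centralizer {y}).map (MulAut.conj b).toMonoidHom := by rw [hC y hyA hy1]
      _ = centralizer {b * y * b⁻¹} := (centralizer_singleton_conj b y).symm
      _ = A := hC _ hxA hx1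
  subst hAa
  have ha1 : a ≠ 1 := by rintro rfl; exact hy1 (by simpa using hyA)
  refine mem_of_sq_mem htf hC ?_
  rw [← hC a (mem_zpowers a) ha1]
  exact sq_mem_centralizer_of_mem_normalizer_zpowers (htf a ha1) hnorm
end
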